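/- arXiv:1901.06343 — 3 statements merged into one kernel-verified Lean document; each statement's English description precedes it below -/
import Mathlib

section
/- Let m₁ and m₂ be mass functions on a finite frame Ω with belief functions bel₁ and bel₂ (where m₁(∅) = m₂(∅) = 0). The disjunctive rule of combination m₁₂(A) = Σ_{B ∪ C = A} m₁(B)·m₂(C) has belief function bel₁₂(A) = bel₁(A)·bel₂(A) for all A ⊆ Ω. -/
/-- belief function of a (normal) mass function -/
noncomputable def belief {Ω : Type*} [Fintype Ω] [DecidableEq Ω]
    (m : Finset Ω → ℝ) (A : Finset Ω) : ℝ :=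
  ∑ B ∈ Finset.univ.filter (fun B => B ≠ ∅ ∧ B ⊆ A), m B

/-- disjunctive rule of combination -/
noncomputable def drc {Ω : Type*} [Fintype Ω] [DecidableEq Ω]
    (m₁ m₂ : Finset Ω → ℝ) (A : Finset Ω) : ℝ :=
  ∑ B : Finset Ω, ∑ C : Finset Ω, if B ∪ C = A then m₁ B * m₂ C else 0

theorem drc_belief {Ω : Type*} [Fintype Ω] [DecidableEq Ω]
    (m₁ m₂ : Finset Ω → ℝ)
    (h₁ : m₁ ∅ = 0) (h₂ : m₂ ∅ = 0) (A : Finset Ω) :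
    belief (drc m₁ m₂) A = belief m₁ A * belief m₂ A := by
  unfold belief drc
  have L : (∑ D ∈ Finset.univ.filter (fun D : Finset Ω => D ≠ ∅ ∧ D ⊆ A),
      ∑ B : Finset Ω, ∑ C : Finset Ω, if B ∪ C = D then m₁ B * m₂ C else 0)
      = ∑ B : Finset Ω, ∑ C : Finset Ω,
        if B ⊆ A ∧ C ⊆ A then m₁ B * m₂ C else 0 := by
    rw [Finset.sum_comm]
    refine Finset.sum_congr rfl fun B _ => ?_
    rw [Finset.sum_comm]
    refine Finset.sum_congr rfl fun C _ => ?_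
    rw [Finset.sum_ite_eq]
    by_cases hB : B = ∅
    · by_cases hC : C = ∅
      · subst hB hC; simp [h₁]
      · subst hB; simp [hC, h₂]
    by_cases hBA : B ⊆ A <;> by_cases hCA : C ⊆ A <;>
      simp [hB, hBA, hCA, Finset.union_subset_iff, Finset.union_eq_empty]
  rw [L, Finset.sum_mul_sum, Finset.sum_filter]
  simp_rw [Finset.sum_filter]
  refine Finset.sum_congr rfl fun B _ => ?_
  by_cases hB : B = ∅
  · subst hB; simp [h₁]
  by_cases hBA : B ⊆ A
  · rw [if_pos ⟨hB, hBA⟩]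
    refine Finset.sum_congr rfl fun C _ => ?_
    by_cases hC : C = ∅
    · subst hC; simp [h₂]
    by_cases hCA : C ⊆ A <;> simp [hB, hC, hBA, hCA]
  · rw [if_neg (by simp [hBA])]
    refine Finset.sum_eq_zero fun C _ => ?_
    simp [hBA]
end

section
/- Let m₁ and m₂ be mass functions on a finite frame Ω that sum to 1 (Σ_A m₁(A) = Σ_A m₂(A) = 1), with commonality functions q₁, q₂. Then the conflict mass of their conjunctive combination satisfies m₁₂(∅) = 1 + Σ_{A ≠ ∅} (-1)^{|A|} q₁(A)·q₂(A). -/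
noncomputable def commonality {Ω : Type*} [Fintype Ω] [DecidableEq Ω]
    (m : Finset Ω → ℝ) (A : Finset Ω) : ℝ :=
  ∑ B ∈ Finset.univ.filter (fun B => A ⊆ B), m B

noncomputable def crc {Ω : Type*} [Fintype Ω] [DecidableEq Ω]
    (m₁ m₂ : Finset Ω → ℝ) (A : Finset Ω) : ℝ :=
  ∑ B : Finset Ω, ∑ C : Finset Ω, if B ∩ C = A then m₁ B * m₂ C else 0

lemma aux_alt {Ω : Type*} [Fintype Ω] [DecidableEq Ω] (s : Finset Ω) :
    ∑ A : Finset Ω, (if A ⊆ s then (-1 : ℝ) ^ A.card else 0) =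
      if s = ∅ then 1 else 0 := by
  rw [← Finset.sum_filter]
  have : (Finset.univ.filter (fun A : Finset Ω => A ⊆ s)) = s.powerset := by
    ext; simp
  rw [this]
  have := Finset.sum_powerset_neg_one_pow_card (x := s)
  have h2 : ((∑ m ∈ s.powerset, (-1 : ℤ) ^ m.card : ℤ) : ℝ) =
      ∑ m ∈ s.powerset, (-1 : ℝ) ^ m.card := by push_cast; ring_nf
  rw [this] at h2
  rw [← h2]
  split <;> norm_num

theorem crc_conflict_from_commonalities {Ω : Type*} [Fintype Ω] [DecidableEq Ω]
    (m₁ m₂ : Finset Ω → ℝ)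
    (h₁ : ∑ A : Finset Ω, m₁ A = 1) (h₂ : ∑ A : Finset Ω, m₂ A = 1) :
    crc m₁ m₂ ∅ =
      1 + ∑ A ∈ Finset.univ.filter (fun A : Finset Ω => A ≠ ∅),
        (-1 : ℝ) ^ A.card * (commonality m₁ A * commonality m₂ A) := by
  have hq1 : commonality m₁ (∅ : Finset Ω) = 1 := by
    simpa [commonality] using h₁
  have hq2 : commonality m₂ (∅ : Finset Ω) = 1 := by
    simpa [commonality] using h₂
  have hsplit :
      ∑ A : Finset Ω, (-1 : ℝ) ^ A.card * (commonality m₁ A * commonality m₂ A) =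
        1 + ∑ A ∈ Finset.univ.filter (fun A : Finset Ω => A ≠ ∅),
          (-1 : ℝ) ^ A.card * (commonality m₁ A * commonality m₂ A) := by
    rw [← Finset.sum_filter_add_sum_filter_not Finset.univ (fun A : Finset Ω => A = ∅)]
    congr 1
    · rw [Finset.filter_eq']
      simp [hq1, hq2]
  rw [← hsplit]
  have expand : ∀ A : Finset Ω,
      (-1 : ℝ) ^ A.card * (commonality m₁ A * commonality m₂ A) =
        ∑ B : Finset Ω, ∑ C : Finset Ω,
          (if A ⊆ B then 1 else 0) * (if A ⊆ C then 1 else 0) *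
            ((-1 : ℝ) ^ A.card * (m₁ B * m₂ C)) := by
    intro A
    simp only [commonality, Finset.sum_filter]
    rw [Finset.sum_mul_sum]
    rw [Finset.mul_sum]
    refine Finset.sum_congr rfl fun B _ => ?_
    rw [Finset.mul_sum]
    refine Finset.sum_congr rfl fun C _ => ?_
    by_cases h1 : A ⊆ B <;> by_cases h2 : A ⊆ C <;> simp [h1, h2] <;> ring
  calc crc m₁ m₂ ∅
      = ∑ B : Finset Ω, ∑ C : Finset Ω,
          (if B ∩ C = ∅ then 1 else 0) * (m₁ B * m₂ C) := by
        unfold crc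
        refine Finset.sum_congr rfl fun B _ => Finset.sum_congr rfl fun C _ => ?_
        split <;> ring
    _ = ∑ B : Finset Ω, ∑ C : Finset Ω,
          (∑ A : Finset Ω, (if A ⊆ B then 1 else 0) * (if A ⊆ C then 1 else 0) *
            ((-1 : ℝ) ^ A.card)) * (m₁ B * m₂ C) := by
        refine Finset.sum_congr rfl fun B _ => Finset.sum_congr rfl fun C _ => ?_
        congr 1
        have : ∀ A : Finset Ω,
            (if A ⊆ B then (1:ℝ) else 0) * (if A ⊆ C then 1 else 0) * ((-1 : ℝ) ^ A.card)
              = if A ⊆ B ∩ C then (-1 : ℝ) ^ A.card else 0 := by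
          intro A
          by_cases h1 : A ⊆ B <;> by_cases h2 : A ⊆ C <;>
            simp [h1, h2, Finset.subset_inter_iff]
        rw [Finset.sum_congr rfl (fun A _ => this A), aux_alt]
    _ = ∑ A : Finset Ω, ∑ B : Finset Ω, ∑ C : Finset Ω,
          (if A ⊆ B then 1 else 0) * (if A ⊆ C then 1 else 0) *
            ((-1 : ℝ) ^ A.card * (m₁ B * m₂ C)) := by
        simp only [Finset.sum_mul]
        rw [Finset.sum_congr rfl (fun B (_ : B ∈ Finset.univ) => Finset.sum_comm)]
        rw [Finset.sum_comm]
        refine Finset.sum_congr rfl fun A _ => Finset.sum_congr rfl fun B _ =>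
          Finset.sum_congr rfl fun C _ => ?_
        ring
    _ = ∑ A : Finset Ω, (-1 : ℝ) ^ A.card * (commonality m₁ A * commonality m₂ A) := by
        exact (Finset.sum_congr rfl fun A _ => (expand A).symm)
end

section
/- If beliefs on singletons are obtained from likelihoods via the commonality definition q(A) = Π_{x ∈ A} L(x) (with q(∅) = 1), and L(x) ∈ [0,1] for all x, then the corresponding mass function m(A) = Σ_{B ⊇ A} (-1)^{|B|-|A|} q(B) factorizes: m(A) = Π_{x ∈ A} L(x) · Π_{x ∉ A} (1 − L(x)) for all A ⊆ Ω. -/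
theorem likelihood_mass_factorization {Ω : Type*} [Fintype Ω] [DecidableEq Ω]
    (L : Ω → ℝ) (hL : ∀ x, 0 ≤ L x ∧ L x ≤ 1) :
    let q : Finset Ω → ℝ := fun A => ∏ x ∈ A, L x
    let m : Finset Ω → ℝ := fun A =>
      ∑ B ∈ Finset.univ.filter (fun B => A ⊆ B), (-1 : ℝ) ^ (B.card - A.card) * q B
    ∀ A : Finset Ω, m A = (∏ x ∈ A, L x) * ∏ x ∈ Aᶜ, (1 - L x) := by
  intro q m A
  simp only [q, m]
  have h1 : (∏ x ∈ Aᶜ, (1 - L x)) = ∏ x ∈ Aᶜ, ((-L x) + 1) := by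
    apply Finset.prod_congr rfl; intro x _; ring
  rw [h1, Finset.prod_add, Finset.mul_sum]
  refine Finset.sum_nbij' (fun B => B \ A) (fun C => A ∪ C) ?_ ?_ ?_ ?_ ?_
  · intro B hB
    simp only [Finset.mem_filter, Finset.mem_univ, true_and] at hB
    simp only [Finset.mem_powerset]
    intro x hx
    simp only [Finset.mem_sdiff] at hx
    simp [hx.2]
  · intro C hC
    simp only [Finset.mem_powerset] at hC
    simp
  · intro B hB
    simp only [Finset.mem_filter, Finset.mem_univ, true_and] at hB
    exact Finset.union_sdiff_of_subset hB
  · intro C hC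
    simp only [Finset.mem_powerset] at hC
    show (A ∪ C) \ A = C
    rw [Finset.union_sdiff_cancel_left]
    rw [Finset.disjoint_left]
    intro x hx hxC
    have := hC hxC
    simp only [Finset.mem_compl] at this
    exact this hx
  · intro B hB
    simp only [Finset.mem_filter, Finset.mem_univ, true_and] at hB
    have hcard : B.card - A.card = (B \ A).card := (Finset.card_sdiff_of_subset hB).symm
    have hprod : (∏ x ∈ B, L x) = (∏ x ∈ A, L x) * ∏ x ∈ B \ A, L x := by
      rw [← Finset.prod_union (Finset.disjoint_sdiff), Finset.union_sdiff_of_subset hB]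
    have hneg : (∏ x ∈ B \ A, (-L x)) = (-1 : ℝ) ^ (B \ A).card * ∏ x ∈ B \ A, L x := by
      calc (∏ x ∈ B \ A, (-L x)) = ∏ x ∈ B \ A, ((-1 : ℝ) * L x) := by
            apply Finset.prod_congr rfl; intro x _; ring
        _ = (-1 : ℝ) ^ (B \ A).card * ∏ x ∈ B \ A, L x := by
            rw [Finset.prod_mul_distrib, Finset.prod_const]
    show (-1 : ℝ) ^ (B.card - A.card) * ∏ x ∈ B, L x
        = (∏ x ∈ A, L x) * ((∏ x ∈ B \ A, (-L x)) * ∏ x ∈ Aᶜ \ (B \ A), (1:ℝ))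
    rw [hcard, hprod, hneg, Finset.prod_const_one]
    ring
end
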